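/- arXiv:1205.2808 — 7 statements merged into one kernel-verified Lean document; each statement's English description precedes it below -/
import Mathlib

section
/- Let V ⊂ (C*)^n be an algebraic variety with defining ideal I(V). Then the amoeba of V equals the intersection over all f ∈ I(V) of the amoebas of the hypersurfaces V_f = {z ∈ (C*)^n : f(z) = 0}: Log(V) = ∩_{f ∈ I(V)} Log(V_f). -/
/-!
If `x` is not in the amoeba of `V`, the fibre `Log⁻¹(x)`, a real torus `|zᵢ| = eˣⁱ`, is compact
and disjoint from `V`. Since `V` is cut out of `(ℂ*)ⁿ` by `I(V)`, finitely many `f₁, …, fₖ ∈ I(V)`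
have no common zero on this torus. On the torus `z̄ᵢ = e²ˣⁱ / zᵢ`, so `zᴺ · conj (fⱼ z)` agrees with
a polynomial `fⱼ†`, and `g = ∑ fⱼ fⱼ† ∈ I(V)` equals `zᴺ ∑ |fⱼ z|²` there, which never vanishes.
Hence `x ∉ Log(V_g)`.
-/

open MvPolynomial Complex Set Metric
open scoped ComplexConjugate

theorem Complex.norm_pow_two_mul_mul_pow_sub (w : ℂ) {a D : ℕ} (ha : a ≤ D) :
    (‖w‖ : ℂ) ^ (2 * a) * w ^ (D - a) = w ^ D * conj w ^ a := by
  rw [pow_mul, ← mul_conj', mul_pow, ← Nat.sub_add_cancel ha, pow_add, Nat.add_sub_cancel]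
  ring

theorem ne_zero_and_log_norm_eq_iff_mem_pi_sphere {ι : Type*} {z : ι → ℂ} {x : ι → ℝ} :
    ((∀ i, z i ≠ 0) ∧ (fun i => Real.log ‖z i‖) = x) ↔
      z ∈ univ.pi fun i => sphere 0 (Real.exp (x i)) := by
  simp only [mem_univ_pi, mem_sphere_zero_iff_norm, funext_iff, ← forall_and]
  refine forall_congr' fun i => ⟨fun ⟨hz, hzx⟩ => ?_, fun hz => ?_⟩
  · rw [← hzx, Real.exp_log (norm_pos_iff.mpr hz)]
  · exact ⟨norm_ne_zero_iff.mp (hz ▸ (Real.exp_pos _).ne'), by rw [hz, Real.log_exp]⟩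

namespace MvPolynomial

variable {σ : Type*}

theorem exists_finset_forall_exists_eval_ne_zero {K : Set (σ → ℂ)} (hK : IsCompact K)
    {I : Set (MvPolynomial σ ℂ)} (hI : ∀ z ∈ K, ∃ f ∈ I, eval z f ≠ 0) :
    ∃ s : Finset (MvPolynomial σ ℂ), ↑s ⊆ I ∧ ∀ z ∈ K, ∃ f ∈ s, eval z f ≠ 0 := by
  obtain ⟨s, hsI, hs, hKs⟩ := hK.elim_finite_subcover_image
    (c := fun f => {z | eval z f ≠ 0})
    (fun f _ => isOpen_ne_fun (continuous_eval f) continuous_const)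
    fun z hz => by simpa using hI z hz
  exact ⟨hs.toFinset, by simpa using hsI, fun z hz => by simpa using hKs hz⟩

variable [Fintype σ]

/-- On the torus `‖zᵢ‖ = rᵢ` we have `conj zᵢ = rᵢ² / zᵢ`, so `z ^ N * conj (f z)` is the value of
this polynomial as soon as every exponent of `f` is `≤ N`. -/
noncomputable def conjReflect (r : σ → ℝ) (N : σ →₀ ℕ) (f : MvPolynomial σ ℂ) :
    MvPolynomial σ ℂ :=
  ∑ d ∈ f.support, monomial (N - d) (conj (f.coeff d) * ∏ i, (r i : ℂ) ^ (2 * d i))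

theorem eval_conjReflect {r : σ → ℝ} {N : σ →₀ ℕ} {f : MvPolynomial σ ℂ}
    (hN : ∀ d ∈ f.support, d ≤ N) {z : σ → ℂ} (hz : z ∈ univ.pi fun i => sphere 0 (r i)) :
    eval z (conjReflect r N f) = (∏ i, z i ^ N i) * conj (eval z f) := by
  simp only [mem_univ_pi, mem_sphere_zero_iff_norm] at hz
  rw [conjReflect, map_sum, eval_eq', map_sum, Finset.mul_sum]
  refine Finset.sum_congr rfl fun d hd => ?_
  rw [eval_monomial, Finsupp.prod_fintype _ _ fun i => pow_zero _, map_mul, map_prod, mul_assoc,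
    ← Finset.prod_mul_distrib]
  simp only [← hz, Finsupp.tsub_apply,
    fun i => norm_pow_two_mul_mul_pow_sub (z i) (hN d hd i), Finset.prod_mul_distrib, map_pow]
  ring

theorem eval_sum_mul_conjReflect {r : σ → ℝ} {N : σ →₀ ℕ} {s : Finset (MvPolynomial σ ℂ)}
    (hN : ∀ f ∈ s, ∀ d ∈ f.support, d ≤ N) {z : σ → ℂ}
    (hz : z ∈ univ.pi fun i => sphere 0 (r i)) :
    eval z (∑ f ∈ s, f * conjReflect r N f) = (∏ i, z i ^ N i) * ∑ f ∈ s, normSq (eval z f) := by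
  rw [map_sum, ofReal_sum, Finset.mul_sum]
  refine Finset.sum_congr rfl fun f hf => ?_
  rw [map_mul, eval_conjReflect (hN f hf) hz, ← mul_conj]
  ring

theorem exists_mem_forall_eval_ne_zero_on_pi_sphere (I : Ideal (MvPolynomial σ ℂ)) {r : σ → ℝ}
    (hr : ∀ i, r i ≠ 0) (hI : ∀ z ∈ univ.pi fun i => sphere 0 (r i), ∃ f ∈ I, eval z f ≠ 0) :
    ∃ g ∈ I, ∀ z ∈ univ.pi fun i => sphere 0 (r i), eval z g ≠ 0 := by
  obtain ⟨s, hsI, hs⟩ := exists_finset_forall_exists_eval_ne_zero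
    (isCompact_univ_pi fun i => isCompact_sphere 0 (r i)) hI
  set N := s.sup fun f => f.support.sup id
  have hN : ∀ f ∈ s, ∀ d ∈ f.support, d ≤ N := fun f hf d hd =>
    (Finset.le_sup (f := id) hd).trans (Finset.le_sup (f := fun f => f.support.sup id) hf)
  refine ⟨∑ f ∈ s, f * conjReflect r N f,
    I.sum_mem fun f hf => I.mul_mem_right _ (hsI hf), fun z hz => ?_⟩
  have hz0 : ∀ i, z i ≠ 0 := fun i h => hr i (by simpa [h, eq_comm] using hz i trivial)
  obtain ⟨f, hf, hfz⟩ := hs z hz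
  rw [eval_sum_mul_conjReflect hN hz]
  refine mul_ne_zero (Finset.prod_ne_zero_iff.mpr fun i _ => pow_ne_zero _ (hz0 i)) ?_
  exact ofReal_ne_zero.mpr (Finset.sum_pos' (fun f _ => normSq_nonneg _)
    ⟨f, hf, normSq_pos.mpr hfz⟩).ne'

end MvPolynomial

/-- The amoeba of an algebraic subvariety V of the torus (ℂ*)ⁿ is the
intersection of the amoebas of the hypersurfaces V_f over all f in the
defining ideal of V. -/
theorem amoeba_eq_iInter_hypersurface_amoebas (n : ℕ) (V : Set (Fin n → ℂ))
    (hV : V = {z : Fin n → ℂ | (∀ i, z i ≠ 0) ∧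
        ∀ f : MvPolynomial (Fin n) ℂ,
          (∀ w ∈ V, MvPolynomial.eval w f = 0) → MvPolynomial.eval z f = 0}) :
    (fun z : Fin n → ℂ => fun i => Real.log ‖z i‖) '' V =
      ⋂ f ∈ {f : MvPolynomial (Fin n) ℂ | ∀ w ∈ V, MvPolynomial.eval w f = 0},
        (fun z : Fin n → ℂ => fun i => Real.log ‖z i‖) ''
          {z : Fin n → ℂ | (∀ i, z i ≠ 0) ∧ MvPolynomial.eval z f = 0} := by
  refine Subset.antisymm ?_ fun x hx => ?_
  · rintro _ ⟨z, hz, rfl⟩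
    exact mem_iInter₂.mpr fun f hf => ⟨z, ⟨(hV ▸ hz).1, hf z hz⟩, rfl⟩
  by_contra hxV
  have hfiber : ∀ z ∈ univ.pi fun i => sphere 0 (Real.exp (x i)),
      ∃ f ∈ vanishingIdeal ℂ V, eval z f ≠ 0 := by
    intro z hz
    obtain ⟨hz0, hzx⟩ := ne_zero_and_log_norm_eq_iff_mem_pi_sphere.mpr hz
    have hzV : z ∉ V := fun hzV => hxV ⟨z, hzV, hzx⟩
    rw [hV] at hzV
    simp only [mem_ofPred_eq, not_and, not_forall, exists_prop] at hzV
    obtain ⟨f, hfV, hfz⟩ := hzV hz0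
    exact ⟨f, by simpa using hfV, hfz⟩
  obtain ⟨g, hgV, hg⟩ := exists_mem_forall_eval_ne_zero_on_pi_sphere _
    (fun i => (Real.exp_pos (x i)).ne') hfiber
  obtain ⟨z, ⟨hz0, hzg⟩, hzx⟩ := mem_iInter₂.mp hx g (by simpa using hgV)
  exact hg z (ne_zero_and_log_norm_eq_iff_mem_pi_sphere.mp ⟨hz0, hzx⟩) hzg
end

section
/- Let V ⊂ (C*)^n be an algebraic variety with defining ideal I(V). Then the coamoeba of V equals the intersection over all f ∈ I(V) of the coamoebas of the hypersurfaces V_f: Arg(V) = ∩_{f ∈ I(V)} Arg(V_f). -/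
open MvPolynomial

/-- Key pointwise identity: if `θ = z/‖z‖` with `z ≠ 0`, then
`conj z = (conj θ)^2 * z`. -/
lemma conj_eq_conj_arg_sq_mul (z : ℂ) (hz : z ≠ 0) :
    (starRingEnd ℂ) z = ((starRingEnd ℂ) (z / (‖z‖ : ℂ))) ^ 2 * z := by
  have hn : (‖z‖ : ℂ) ≠ 0 := by
    simpa using (norm_ne_zero_iff.mpr hz)
  rw [map_div₀, Complex.conj_ofReal, div_pow, div_mul_eq_mul_div,
    eq_div_iff (pow_ne_zero 2 hn)]
  have h1 : (starRingEnd ℂ) z * z = (‖z‖ : ℂ) ^ 2 := by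
    rw [mul_comm, Complex.mul_conj, Complex.normSq_eq_norm_sq]
    push_cast
    rfl
  linear_combination (-(starRingEnd ℂ) z) * h1

/-- The coamoeba of an algebraic subvariety V of the torus (ℂ*)ⁿ is the
intersection of the coamoebas of the hypersurfaces V_f over all f in the
defining ideal of V. -/
theorem coamoeba_eq_iInter_hypersurface_coamoebas (n : ℕ) (V : Set (Fin n → ℂ))
    (hV : V = {z : Fin n → ℂ | (∀ i, z i ≠ 0) ∧
        ∀ f : MvPolynomial (Fin n) ℂ,
          (∀ w ∈ V, MvPolynomial.eval w f = 0) → MvPolynomial.eval z f = 0}) :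
    (fun z : Fin n → ℂ => fun i => z i / (‖z i‖ : ℂ)) '' V =
      ⋂ f ∈ {f : MvPolynomial (Fin n) ℂ | ∀ w ∈ V, MvPolynomial.eval w f = 0},
        (fun z : Fin n → ℂ => fun i => z i / (‖z i‖ : ℂ)) ''
          {z : Fin n → ℂ | (∀ i, z i ≠ 0) ∧ MvPolynomial.eval z f = 0} := by
  ext θ
  simp only [Set.mem_iInter, Set.mem_image, Set.mem_setOf_eq]
  constructor
  · rintro ⟨z, hz, rfl⟩ f hf
    have hz' : (∀ i, z i ≠ 0) ∧ ∀ g : MvPolynomial (Fin n) ℂ,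
        (∀ w ∈ V, MvPolynomial.eval w g = 0) → MvPolynomial.eval z g = 0 := by
      rw [hV] at hz; exact hz
    exact ⟨z, ⟨hz'.1, hf z hz⟩, rfl⟩
  · intro hθ
    -- the defining ideal of V
    set J : Ideal (MvPolynomial (Fin n) ℂ) :=
      { carrier := {f | ∀ w ∈ V, MvPolynomial.eval w f = 0}
        add_mem' := fun ha hb w hw => by
          rw [map_add, ha w hw, hb w hw, add_zero]
        zero_mem' := fun w hw => by simp
        smul_mem' := fun c f hf w hw => by
          simp only [smul_eq_mul, map_mul, hf w hw, mul_zero] } with hJdef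
    obtain ⟨S, hS⟩ : J.FG := IsNoetherian.noetherian J
    have hSJ : ∀ f ∈ S, ∀ w ∈ V, MvPolynomial.eval w f = 0 := by
      intro f hf w hw
      have hfJ : f ∈ J := hS ▸ Ideal.subset_span hf
      exact hfJ w hw
    -- the twisting operation: conjugate coefficients and rescale variables by conj(θ i)^2
    set c : Fin n → ℂ := fun i => ((starRingEnd ℂ) (θ i)) ^ 2 with hc
    set tw : MvPolynomial (Fin n) ℂ → MvPolynomial (Fin n) ℂ :=
      fun f => eval₂ (C.comp (starRingEnd ℂ)) (fun i => C (c i) * X i) f with htw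
    set h : MvPolynomial (Fin n) ℂ := ∑ f ∈ S, tw f * f with hh
    have hhJ : ∀ w ∈ V, MvPolynomial.eval w h = 0 := by
      intro w hw
      rw [hh, map_sum]
      refine Finset.sum_eq_zero fun f hf => ?_
      rw [map_mul, hSJ f hf w hw, mul_zero]
    obtain ⟨z, ⟨hz0, hzh⟩, hzθ⟩ := hθ h hhJ
    have hθz : ∀ i, θ i = z i / (‖z i‖ : ℂ) := fun i => (congrFun hzθ i).symm
    -- on the fiber over θ, conjugation is given by multiplication by c
    have hconj : ∀ i, (starRingEnd ℂ) (z i) = c i * z i := by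
      intro i
      have h0 := conj_eq_conj_arg_sq_mul (z i) (hz0 i)
      rw [← hθz i] at h0
      simpa [hc] using h0
    -- evaluation of the twist is the conjugate of the evaluation
    have htwist : ∀ f : MvPolynomial (Fin n) ℂ,
        MvPolynomial.eval z (tw f) = (starRingEnd ℂ) (MvPolynomial.eval z f) := by
      intro f
      have h1 : MvPolynomial.eval z (tw f) =
          eval₂ ((MvPolynomial.eval z).comp (C.comp (starRingEnd ℂ)))
            ((MvPolynomial.eval z) ∘ (fun i => C (c i) * X i)) f :=
        eval₂_comp_left (MvPolynomial.eval z) (C.comp (starRingEnd ℂ))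
          (fun i => C (c i) * X i) f
      have h2 : (starRingEnd ℂ) (MvPolynomial.eval z f) =
          eval₂ ((starRingEnd ℂ).comp (RingHom.id ℂ)) ((starRingEnd ℂ) ∘ z) f := by
        have := eval₂_comp_left (starRingEnd ℂ) (RingHom.id ℂ) z f
        rw [← this]
        rfl
      have hring : (MvPolynomial.eval z).comp (C.comp (starRingEnd ℂ)) =
          (starRingEnd ℂ).comp (RingHom.id ℂ) := by
        ext a
        simp
      have hvars : ((MvPolynomial.eval z) ∘ fun i => C (c i) * X i) =
          ((starRingEnd ℂ) ∘ z) := by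
        funext i
        simp only [Function.comp_apply, map_mul, eval_C, eval_X]
        exact (hconj i).symm
      rw [h1, h2, hring, hvars]
    -- evaluation of h at z is a sum of norm squares
    have hsum : MvPolynomial.eval z h =
        ((∑ f ∈ S, Complex.normSq (MvPolynomial.eval z f) : ℝ) : ℂ) := by
      rw [hh, map_sum]
      push_cast
      refine Finset.sum_congr rfl fun f hf => ?_
      rw [map_mul, htwist f, mul_comm, Complex.mul_conj]
    have hs0 : (∑ f ∈ S, Complex.normSq (MvPolynomial.eval z f)) = 0 := by
      rw [← Complex.ofReal_eq_zero, ← hsum]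
      exact hzh
    have hall : ∀ f ∈ S, MvPolynomial.eval z f = 0 := by
      intro f hf
      have hnn : ∀ g ∈ S, 0 ≤ Complex.normSq (MvPolynomial.eval z g) :=
        fun g _ => Complex.normSq_nonneg _
      exact Complex.normSq_eq_zero.mp ((Finset.sum_eq_zero_iff_of_nonneg hnn).mp hs0 f hf)
    have hker : Ideal.span (↑S : Set (MvPolynomial (Fin n) ℂ)) ≤
        RingHom.ker (MvPolynomial.eval z) :=
      Ideal.span_le.mpr fun g hg => RingHom.mem_ker.mpr (hall g hg)
    have hzV : z ∈ V := by
      rw [hV]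
      refine ⟨hz0, fun f hf => ?_⟩
      have hfJ : f ∈ J := hf
      rw [← hS] at hfJ
      exact RingHom.mem_ker.mp (hker hfJ)
    exact ⟨z, hzV, hzθ⟩
end

section
/- Let V ⊂ (C*)^n be an algebraic variety with defining ideal I(V), and let r ∈ (R_{>0})^n be such that the torus T_r = {z : |z_i| = r_i ∀i} does not intersect V. Then there exists a Laurent polynomial G ∈ I(V) such that the hypersurface V_G does not intersect T_r. In particular, if Log(r) ∉ amoeba(V), then Log(r) ∉ amoeba(V_G) for some G ∈ I(V). -/
/-!
Since `V` is cut out of `(ℂ*)ⁿ` by `I(V)` and `I(V)` is generated by finitely many `g`, every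
point of `T_r` is a non-zero of some generator. Put `G = ∑ g · ĝ`, where
`ĝ(z) = z ^ N · conj (g (r² / conj z))` is the reflection of `g` in `T_r`; on `T_r` we have
`r² / conj z = z`, so `G = z ^ N · ∑ |g|²` does not vanish there. As `Log` is injective on the
positive reals, `Log z = Log r` puts `z` on `T_r`.
-/

open MvPolynomial ComplexConjugate

section TorusReflection

variable {σ : Type*} [Fintype σ]

/-- `z ^ N * conj (f (r² / conj z))`, a polynomial once `N` bounds every `degreeOf i f`. -/
noncomputable def torusReflection (N : ℕ) (r : σ → ℝ) (f : MvPolynomial σ ℂ) :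
    MvPolynomial σ ℂ :=
  ∑ α ∈ f.support, monomial (Finsupp.equivFunOnFinite.symm fun i => N - α i)
    (conj (coeff α f) * ∏ i, (r i : ℂ) ^ (2 * α i))

lemma Complex.ofReal_pow_two_mul_mul_pow_sub {z : ℂ} {ρ : ℝ} (hz : ‖z‖ = ρ) {a N : ℕ}
    (ha : a ≤ N) : (ρ : ℂ) ^ (2 * a) * z ^ (N - a) = z ^ N * conj z ^ a := by
  rw [pow_mul, ← hz, ← Complex.mul_conj', mul_pow, mul_right_comm,
    ← pow_add, Nat.add_sub_cancel' ha]

lemma eval_torusReflection {N : ℕ} {r : σ → ℝ} {f : MvPolynomial σ ℂ}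
    (hN : ∀ i, f.degreeOf i ≤ N) {z : σ → ℂ} (hz : ∀ i, ‖z i‖ = r i) :
    eval z (torusReflection N r f) = (∏ i, z i ^ N) * conj (eval z f) := by
  rw [eval_eq' (f := f), map_sum, Finset.mul_sum, torusReflection, map_sum]
  refine Finset.sum_congr rfl fun α hα => ?_
  have hcoord : ∀ i, (r i : ℂ) ^ (2 * α i) * z i ^ (N - α i) = z i ^ N * conj (z i) ^ α i :=
    fun i => Complex.ofReal_pow_two_mul_mul_pow_sub (hz i)
      ((monomial_le_degreeOf i hα).trans (hN i))
  simp only [eval_monomial, Finsupp.prod_fintype _ _ (fun i => pow_zero _),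
    Finsupp.equivFunOnFinite_symm_apply_apply, map_mul, map_prod, map_pow]
  rw [mul_assoc, ← Finset.prod_mul_distrib, Finset.prod_congr rfl fun i _ => hcoord i,
    Finset.prod_mul_distrib]
  ring

lemma eval_mul_torusReflection {N : ℕ} {r : σ → ℝ} {f : MvPolynomial σ ℂ}
    (hN : ∀ i, f.degreeOf i ≤ N) {z : σ → ℂ} (hz : ∀ i, ‖z i‖ = r i) :
    eval z (f * torusReflection N r f) = (∏ i, z i ^ N) * Complex.normSq (eval z f) := by
  rw [eval_mul, eval_torusReflection hN hz, ← Complex.mul_conj]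
  ring

lemma eval_sum_mul_torusReflection_ne_zero {N : ℕ} {r : σ → ℝ} (hr : ∀ i, 0 < r i)
    {s : Finset (MvPolynomial σ ℂ)} (hN : ∀ g ∈ s, ∀ i, g.degreeOf i ≤ N)
    {z : σ → ℂ} (hz : ∀ i, ‖z i‖ = r i) (hs : ∃ g ∈ s, eval z g ≠ 0) :
    eval z (∑ g ∈ s, g * torusReflection N r g) ≠ 0 := by
  obtain ⟨g₀, hg₀, hg₀z⟩ := hs
  have hz0 : ∀ i, z i ≠ 0 := fun i => norm_pos_iff.1 ((hz i).symm ▸ hr i)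
  have hsum : 0 < ∑ g ∈ s, Complex.normSq (eval z g) :=
    Finset.sum_pos' (fun g _ => Complex.normSq_nonneg _) ⟨g₀, hg₀, Complex.normSq_pos.2 hg₀z⟩
  rw [map_sum, Finset.sum_congr rfl fun g hg => eval_mul_torusReflection (hN g hg) hz,
    ← Finset.mul_sum]
  exact mul_ne_zero (Finset.prod_ne_zero_iff.2 fun i _ => pow_ne_zero _ (hz0 i))
    (by exact_mod_cast hsum.ne')

end TorusReflection

lemma Ideal.exists_mem_span_apply_ne_zero {R S : Type*} [CommSemiring R] [Semiring S]
    (φ : R →+* S) {s : Set R} {f : R} (hf : f ∈ Ideal.span s) (hφ : φ f ≠ 0) :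
    ∃ g ∈ s, φ g ≠ 0 := by
  by_contra! h
  exact hφ (Ideal.span_le.2 (fun g hg => RingHom.mem_ker.2 (h g hg)) hf)

lemma eq_of_log_eq_log {ι : Type*} {x r : ι → ℝ} (hx : ∀ i, 0 < x i) (hr : ∀ i, 0 < r i)
    (h : (fun i => Real.log (x i)) = fun i => Real.log (r i)) : x = r :=
  funext fun i => Real.log_injOn_pos (hx i) (hr i) (congrFun h i)

/-- If the torus T_r misses the variety V, then some G in the defining ideal
of V has hypersurface missing T_r; in particular Log r is not in the
amoeba of V_G. -/
theorem exists_poly_in_ideal_nonvanishing_on_torus (n : ℕ) (V : Set (Fin n → ℂ))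
    (hV : V = {z : Fin n → ℂ | (∀ i, z i ≠ 0) ∧
        ∀ f : MvPolynomial (Fin n) ℂ,
          (∀ w ∈ V, MvPolynomial.eval w f = 0) → MvPolynomial.eval z f = 0})
    (r : Fin n → ℝ) (hr : ∀ i, 0 < r i)
    (hdisj : ∀ z ∈ V, ¬ (∀ i, ‖z i‖ = r i)) :
    ∃ G : MvPolynomial (Fin n) ℂ,
      (∀ w ∈ V, MvPolynomial.eval w G = 0) ∧
      (∀ z : Fin n → ℂ, (∀ i, ‖z i‖ = r i) → MvPolynomial.eval z G ≠ 0) ∧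
      (fun i => Real.log (r i)) ∉
        (fun z : Fin n → ℂ => fun i => Real.log ‖z i‖) ''
          {z : Fin n → ℂ | (∀ i, z i ≠ 0) ∧ MvPolynomial.eval z G = 0} := by
  have hI : ∀ f, f ∈ vanishingIdeal ℂ V ↔ ∀ w ∈ V, eval w f = 0 := by
    simp [mem_vanishingIdeal_iff]
  obtain ⟨s, hs⟩ := IsNoetherian.noetherian (vanishingIdeal ℂ V)
  let N := s.sup totalDegree
  let G := ∑ g ∈ s, g * torusReflection N r g
  have hGV : ∀ w ∈ V, eval w G = 0 := (hI G).1 <| Ideal.sum_mem _ fun g hg =>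
    Ideal.mul_mem_right _ _ (hs ▸ Submodule.subset_span hg)
  have hGT : ∀ z : Fin n → ℂ, (∀ i, ‖z i‖ = r i) → eval z G ≠ 0 := by
    intro z hz
    have hz0 : ∀ i, z i ≠ 0 := fun i => norm_pos_iff.1 ((hz i).symm ▸ hr i)
    have hzV : ¬ ((∀ i, z i ≠ 0) ∧ ∀ f : MvPolynomial (Fin n) ℂ,
        (∀ w ∈ V, eval w f = 0) → eval z f = 0) :=
      fun h => hdisj z (by rw [hV]; exact h) hz
    push Not at hzV
    obtain ⟨f, hf, hfz⟩ := hzV hz0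
    rw [← hI, ← hs] at hf
    exact eval_sum_mul_torusReflection_ne_zero hr
      (fun g hg i => (degreeOf_le_totalDegree g i).trans (Finset.le_sup hg)) hz
      (Ideal.exists_mem_span_apply_ne_zero (eval z) hf hfz)
  refine ⟨G, hGV, hGT, ?_⟩
  rintro ⟨z, ⟨hz0, hzG⟩, hlog⟩
  exact hGT z (congrFun (eq_of_log_eq_log (fun i => norm_pos_iff.2 (hz0 i)) hr hlog)) hzG
end

section
/- Consider the line L = {(t, 1+t) : t ∈ C \ {0,−1}} ⊂ (C*)^2. The restriction of the argument map Arg(z_1,z_2) = (arg z_1, arg z_2) to the set of points t with Im(t) > 0 is injective, and similarly for Im(t) < 0. -/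
/-!
A point `t` off the real axis is the intersection of the line through `0` and `t` with the line
through `-1` and `t`. These two lines are distinct, so they meet only at `t`; and `arg t`,
`arg (1 + t)` determine them.
-/

namespace Complex

theorem exists_ofReal_mul_eq_of_arg_eq {z w : ℂ} (hz : z ≠ 0) (h : arg z = arg w) :
    ∃ r : ℝ, (r : ℂ) * z = w := by
  rcases eq_or_ne w 0 with rfl | hw
  · exact ⟨0, by simp⟩
  · exact ⟨‖w‖ / ‖z‖, by exact_mod_cast (arg_eq_arg_iff hz hw).mp h⟩

theorem eq_of_ofReal_mul_eq_of_ofReal_mul_one_add_eq {z w : ℂ} {r s : ℝ} (hz : z.im ≠ 0)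
    (hr : (r : ℂ) * z = w) (hs : (s : ℂ) * (1 + z) = 1 + w) : z = w := by
  have hline : ((s - r : ℝ) : ℂ) * z = ((1 - s : ℝ) : ℂ) := by
    push_cast; linear_combination hs - hr
  have hsr : s = r := by
    have him := congrArg im hline
    simp only [im_ofReal_mul, ofReal_im] at him
    exact sub_eq_zero.mp ((mul_eq_zero.mp him).resolve_right hz)
  have hs1 : s = 1 := by
    have hre := congrArg re hline
    simp only [hsr, sub_self, ofReal_zero, zero_mul, zero_re, ofReal_re] at hre
    linarith
  rw [← hr, ← hsr, hs1, ofReal_one, one_mul]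

theorem eq_of_arg_eq_of_arg_one_add_eq {t₁ t₂ : ℂ} (ht : t₁.im ≠ 0)
    (ha : arg t₁ = arg t₂) (hb : arg (1 + t₁) = arg (1 + t₂)) : t₁ = t₂ := by
  have h₀ : t₁ ≠ 0 := fun h => ht (by simp [h])
  have h₁ : 1 + t₁ ≠ 0 := fun h => ht (by simpa using congrArg im h)
  obtain ⟨r, hr⟩ := exists_ofReal_mul_eq_of_arg_eq h₀ ha
  obtain ⟨s, hs⟩ := exists_ofReal_mul_eq_of_arg_eq h₁ hb
  exact eq_of_ofReal_mul_eq_of_ofReal_mul_one_add_eq ht hr hs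

end Complex

/-- The argument map restricted to the line {(t,1+t)} is injective on the
upper half-plane, and likewise on the lower half-plane. -/
theorem arg_map_injective_on_half_planes :
    (∀ t₁ t₂ : ℂ, 0 < t₁.im → 0 < t₂.im →
      Complex.arg t₁ = Complex.arg t₂ →
      Complex.arg (1 + t₁) = Complex.arg (1 + t₂) → t₁ = t₂) ∧
    (∀ t₁ t₂ : ℂ, t₁.im < 0 → t₂.im < 0 →
      Complex.arg t₁ = Complex.arg t₂ →
      Complex.arg (1 + t₁) = Complex.arg (1 + t₂) → t₁ = t₂) :=
  ⟨fun _ _ h₁ _ => Complex.eq_of_arg_eq_of_arg_one_add_eq h₁.ne',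
    fun _ _ h₁ _ => Complex.eq_of_arg_eq_of_arg_one_add_eq h₁.ne⟩
end

section
/- For the line L = {(t, 1+t) : t ∈ C \ {0,−1}} ⊂ (C*)^2, the coamoeba Arg(L) ⊂ (R/2πZ)^2 has Lebesgue (Haar) measure equal to π^2. -/
/-! The coamoeba is the image in the torus of the set of pairs `(arg t, arg (1 + t))`, which lies
in the box `(-π, π]²`; on that box the quotient map is injective and measure preserving. Comparing
`arg t` with `arg (1 + t)` through `sin (arg t - arg (1 + t)) = Im t / (|t| |1 + t|)` places the
pairs with `Im t > 0` in the open triangle `0 < y < x < π` and those with `Im t < 0` in its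
reflection `-π < x < y < 0`; by the law of sines every point of the two triangles occurs, and real
`t` contribute only three points. Each triangle has area `π² / 2`. -/

open MeasureTheory

instance : Fact (0 < 2 * Real.pi) := ⟨by positivity⟩

open Set
open scoped Real

theorem AddCircle.volume_image_prodMap_coe {T : ℝ} [Fact (0 < T)] (a b : ℝ) {A : Set (ℝ × ℝ)}
    (hA : MeasurableSet A) (hbox : A ⊆ Ioc a (a + T) ×ˢ Ioc b (b + T)) :
    volume (Prod.map (↑) (↑) '' A : Set (AddCircle T × AddCircle T)) = volume A := by
  set box := Ioc a (a + T) ×ˢ Ioc b (b + T)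
  let lift : AddCircle T × AddCircle T → ℝ × ℝ := fun p =>
    ((AddCircle.equivIoc T a p.1 : ℝ), (AddCircle.equivIoc T b p.2 : ℝ))
  have hlift : Measurable lift :=
    (measurable_subtype_coe.comp ((AddCircle.measurableEquivIoc T a).measurable.comp
      measurable_fst)).prodMk
    (measurable_subtype_coe.comp ((AddCircle.measurableEquivIoc T b).measurable.comp
      measurable_snd))
  have hlift_coe : ∀ q ∈ box, lift (Prod.map (↑) (↑) q) = q := fun q hq =>
    Prod.ext (AddCircle.equivIoc_coe_of_mem hq.1) (AddCircle.equivIoc_coe_of_mem hq.2)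
  have himage : Prod.map (↑) (↑) '' A = lift ⁻¹' A := by
    ext p
    constructor
    · rintro ⟨q, hq, rfl⟩
      rwa [mem_preimage, hlift_coe q (hbox hq)]
    · intro hp
      exact ⟨lift p, hp, Prod.ext (AddCircle.coe_equivIoc ..) (AddCircle.coe_equivIoc ..)⟩
  have hmp : MeasurePreserving (Prod.map ((↑) : ℝ → AddCircle T) ((↑) : ℝ → AddCircle T))
      (volume.restrict box) volume := by
    rw [Measure.volume_eq_prod, ← Measure.prod_restrict, Measure.volume_eq_prod]
    exact (AddCircle.measurePreserving_mk T a).prod (AddCircle.measurePreserving_mk T b)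
  rw [← hmp.measure_preimage (himage ▸ hA.preimage hlift).nullMeasurableSet,
    Measure.restrict_apply' (measurableSet_Ioc.prod measurableSet_Ioc)]
  congr 1
  ext q
  refine ⟨fun ⟨hq, hqbox⟩ => ?_, fun hq => ⟨mem_image_of_mem _ hq, hbox hq⟩⟩
  rw [mem_preimage, himage, mem_preimage, hlift_coe q hqbox] at hq
  exact hq

theorem Real.pos_of_sin_pos {x : ℝ} (hsin : 0 < Real.sin x) (hx : -π ≤ x) : 0 < x := by
  by_contra! h
  exact (Real.sin_nonpos_of_nonpos_of_neg_pi_le h hx).not_gt hsin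

theorem Real.neg_of_sin_neg {x : ℝ} (hsin : Real.sin x < 0) (hx : x ≤ π) : x < 0 := by
  by_contra! h
  exact (Real.sin_nonneg_of_nonneg_of_le_pi h hx).not_gt hsin

namespace Complex

theorem ne_zero_of_im_ne_zero {z : ℂ} (h : z.im ≠ 0) : z ≠ 0 :=
  fun hz => h (by simp [hz])

theorem arg_pos_of_im_pos {z : ℂ} (h : 0 < z.im) : 0 < arg z := by
  have hnorm : 0 < ‖z‖ := norm_pos_iff.2 (ne_zero_of_im_ne_zero h.ne')
  exact Real.pos_of_sin_pos (by rw [sin_arg]; exact div_pos h hnorm) (neg_pi_lt_arg z).le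

theorem sin_arg_sub_arg_one_add {t : ℂ} (ht₀ : t ≠ 0) (ht₁ : 1 + t ≠ 0) :
    Real.sin (arg t - arg (1 + t)) = t.im / (‖t‖ * ‖1 + t‖) := by
  rw [Real.sin_sub, sin_arg, sin_arg, cos_arg ht₀, cos_arg ht₁]
  have h0 : ‖t‖ ≠ 0 := norm_ne_zero_iff.2 ht₀
  have h1 : ‖1 + t‖ ≠ 0 := norm_ne_zero_iff.2 ht₁
  field_simp
  simp only [add_re, add_im, one_re, one_im]
  ring

theorem arg_one_add_lt_arg {t : ℂ} (h : 0 < t.im) : arg (1 + t) < arg t := by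
  have h₁ : 0 < (1 + t).im := by simpa using h
  have ht₀ := ne_zero_of_im_ne_zero h.ne'
  have ht₁ := ne_zero_of_im_ne_zero h₁.ne'
  have hsin : 0 < Real.sin (arg t - arg (1 + t)) := by
    rw [sin_arg_sub_arg_one_add ht₀ ht₁]
    exact div_pos h (mul_pos (norm_pos_iff.2 ht₀) (norm_pos_iff.2 ht₁))
  have hlow : -π ≤ arg t - arg (1 + t) := by
    linarith [arg_nonneg_iff.2 h.le, arg_le_pi (1 + t)]
  linarith [Real.pos_of_sin_pos hsin hlow]

theorem arg_lt_arg_one_add {t : ℂ} (h : t.im < 0) : arg t < arg (1 + t) := by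
  have h₁ : (1 + t).im < 0 := by simpa using h
  have ht₀ := ne_zero_of_im_ne_zero h.ne
  have ht₁ := ne_zero_of_im_ne_zero h₁.ne
  have hsin : Real.sin (arg t - arg (1 + t)) < 0 := by
    rw [sin_arg_sub_arg_one_add ht₀ ht₁]
    exact div_neg_of_neg_of_pos h (mul_pos (norm_pos_iff.2 ht₀) (norm_pos_iff.2 ht₁))
  have hup : arg t - arg (1 + t) ≤ π := by
    linarith [arg_neg_iff.2 h, neg_pi_lt_arg (1 + t)]
  linarith [Real.neg_of_sin_neg hsin hup]

theorem exists_arg_eq_and_arg_one_add_eq {x y : ℝ} (hx : x ∈ Ioc (-π) π)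
    (hy : y ∈ Ioc (-π) π) (hr : 0 < Real.sin y / Real.sin (x - y))
    (hs : 0 < Real.sin x / Real.sin (x - y)) :
    ∃ t : ℂ, t ≠ 0 ∧ t ≠ -1 ∧ arg t = x ∧ arg (1 + t) = y := by
  have hd : Real.sin (x - y) ≠ 0 := fun h => by simp [h] at hr
  have hunit (θ : ℝ) : (cos θ + sin θ * I : ℂ) ≠ 0 := fun h => by
    simpa [h] using norm_cos_add_sin_mul_I θ
  set t : ℂ := ↑(Real.sin y / Real.sin (x - y)) * (cos x + sin x * I)
  -- the law of sines in the triangle with vertices `-1`, `0`, `t`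
  have hsum : 1 + t = ↑(Real.sin x / Real.sin (x - y)) * (cos y + sin y * I) := by
    simp only [t, ← ofReal_cos, ← ofReal_sin]
    apply Complex.ext <;>
      simp only [add_re, add_im, mul_re, mul_im, one_re, one_im, ofReal_re, ofReal_im, I_re, I_im]
    · field_simp
      rw [Real.sin_sub]
      ring
    · field_simp
      ring
  refine ⟨t, mul_ne_zero (ofReal_ne_zero.2 hr.ne') (hunit x), fun h => ?_, ?_, ?_⟩
  · rw [h, add_neg_cancel] at hsum
    exact mul_ne_zero (ofReal_ne_zero.2 hs.ne') (hunit y) hsum.symm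
  · rw [arg_real_mul _ hr, arg_cos_add_sin_mul_I hx]
  · rw [hsum, arg_real_mul _ hs, arg_cos_add_sin_mul_I hy]

theorem arg_pair_mem_of_im_eq_zero {t : ℂ} (h₀ : t ≠ 0) (h₁ : t ≠ -1) (him : t.im = 0) :
    (arg t, arg (1 + t)) ∈ ({(0, 0), (π, 0), (π, π)} : Set (ℝ × ℝ)) := by
  have hre₀ : t.re ≠ 0 := fun h => h₀ (Complex.ext h him)
  have hre₁ : t.re ≠ -1 := fun h => h₁ (Complex.ext (by simp [h]) (by simp [him]))
  simp only [mem_insert_iff, mem_singleton_iff, Prod.mk.injEq, arg_eq_zero_iff, arg_eq_pi_iff,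
    add_re, add_im, one_re, one_im, him, add_zero, and_true]
  grind

end Complex

open Complex

def upperTriangle : Set (ℝ × ℝ) := {q | 0 < q.2 ∧ q.2 < q.1 ∧ q.1 < π}

theorem measurableSet_upperTriangle : MeasurableSet upperTriangle :=
  (measurableSet_lt measurable_const measurable_snd).inter
    ((measurableSet_lt measurable_snd measurable_fst).inter
      (measurableSet_lt measurable_fst measurable_const))

theorem disjoint_upperTriangle_neg : Disjoint upperTriangle (-upperTriangle) := by
  rw [disjoint_left]
  rintro q ⟨hq, -, -⟩ ⟨hq', -, -⟩
  exact (neg_pos.1 hq').not_gt hq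

theorem volume_upperTriangle : volume upperTriangle = ENNReal.ofReal (π ^ 2 / 2) := by
  have hregion : upperTriangle = regionBetween (fun _ => 0) id (Ioo 0 π) := by
    ext ⟨x, y⟩
    simp only [upperTriangle, regionBetween, mem_ofPred_eq, mem_Ioo, id]
    grind
  have hid : IntegrableOn id (Ioo 0 π) :=
    continuous_id.integrableOn_Icc.mono_set Ioo_subset_Icc_self
  rw [hregion, Measure.volume_eq_prod, volume_regionBetween_eq_integral integrableOn_zero hid
    measurableSet_Ioo (fun x hx => hx.1.le), ← integral_Ioc_eq_integral_Ioo,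
    ← intervalIntegral.integral_of_le Real.pi_pos.le]
  simp

def coamoebaLift : Set (ℝ × ℝ) :=
  (fun t : ℂ => (arg t, arg (1 + t))) '' {t | t ≠ 0 ∧ t ≠ -1}

theorem coamoebaLift_subset_Ioc_prod_Ioc :
    coamoebaLift ⊆ Ioc (-π) (-π + 2 * π) ×ˢ Ioc (-π) (-π + 2 * π) := by
  rintro _ ⟨t, -, rfl⟩
  rw [show -π + 2 * π = π by ring]
  exact ⟨arg_mem_Ioc t, arg_mem_Ioc (1 + t)⟩

theorem coamoebaLift_subset :
    coamoebaLift ⊆ upperTriangle ∪ -upperTriangle ∪ {(0, 0), (π, 0), (π, π)} := by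
  rintro _ ⟨t, ⟨h₀, h₁⟩, rfl⟩
  rcases lt_trichotomy t.im 0 with him | him | him
  · refine Or.inl (Or.inr ⟨?_, ?_, ?_⟩)
    · simpa using arg_neg_iff.2 (by simpa using him)
    · simpa using arg_lt_arg_one_add him
    · simpa [neg_lt] using neg_pi_lt_arg t
  · exact Or.inr (arg_pair_mem_of_im_eq_zero h₀ h₁ him)
  · exact Or.inl (Or.inl ⟨arg_pos_of_im_pos (by simpa using him), arg_one_add_lt_arg him,
      arg_lt_pi_iff.2 (Or.inr him.ne')⟩)

theorem upperTriangle_subset_coamoebaLift : upperTriangle ⊆ coamoebaLift := by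
  rintro ⟨x, y⟩ ⟨hy, hyx, hx⟩
  have hsin {θ : ℝ} (h₀ : 0 < θ) (hπ : θ < π) := Real.sin_pos_of_pos_of_lt_pi h₀ hπ
  obtain ⟨t, h₀, h₁, harg, harg₁⟩ := exists_arg_eq_and_arg_one_add_eq (x := x) (y := y)
    ⟨by linarith, hx.le⟩ ⟨by linarith, by linarith⟩
    (div_pos (hsin hy (by linarith)) (hsin (by linarith) (by linarith)))
    (div_pos (hsin (by linarith) hx) (hsin (by linarith) (by linarith)))
  exact ⟨t, ⟨h₀, h₁⟩, Prod.ext harg harg₁⟩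

theorem neg_upperTriangle_subset_coamoebaLift : -upperTriangle ⊆ coamoebaLift := by
  rintro ⟨x, y⟩ ⟨hy, hyx, hx⟩
  simp only [Prod.fst_neg, Prod.snd_neg] at hy hyx hx
  have hsin {θ : ℝ} (h₀ : θ < 0) (hπ : -π < θ) := Real.sin_neg_of_neg_of_neg_pi_lt h₀ hπ
  obtain ⟨t, h₀, h₁, harg, harg₁⟩ := exists_arg_eq_and_arg_one_add_eq (x := x) (y := y)
    ⟨by linarith, by linarith⟩ ⟨by linarith, by linarith⟩
    (div_pos_of_neg_of_neg (hsin (by linarith) (by linarith)) (hsin (by linarith) (by linarith)))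
    (div_pos_of_neg_of_neg (hsin (by linarith) (by linarith)) (hsin (by linarith) (by linarith)))
  exact ⟨t, ⟨h₀, h₁⟩, Prod.ext harg harg₁⟩

theorem coamoebaLift_eq :
    coamoebaLift = upperTriangle ∪ -upperTriangle ∪ {(0, 0), (π, 0), (π, π)} := by
  refine coamoebaLift_subset.antisymm (union_subset (union_subset
    upperTriangle_subset_coamoebaLift neg_upperTriangle_subset_coamoebaLift) ?_)
  rintro _ (rfl | rfl | rfl)
  · exact ⟨1, ⟨by norm_num, by norm_num⟩, Prod.ext arg_one (arg_eq_zero_iff.2 (by norm_num))⟩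
  · exact ⟨-1 / 2, ⟨by norm_num, by norm_num⟩,
      Prod.ext (arg_eq_pi_iff.2 (by norm_num)) (arg_eq_zero_iff.2 (by norm_num))⟩
  · exact ⟨-2, ⟨by norm_num, by norm_num⟩,
      Prod.ext (arg_eq_pi_iff.2 (by norm_num)) (arg_eq_pi_iff.2 (by norm_num))⟩

/-- The coamoeba of the line {(t, 1+t)} ⊂ (ℂ*)² has measure π² in the
torus (ℝ/2πℤ)². -/
theorem coamoeba_of_line_volume :
    volume {p : AddCircle (2 * Real.pi) × AddCircle (2 * Real.pi) |
        ∃ t : ℂ, t ≠ 0 ∧ t ≠ -1 ∧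
          p.1 = (Complex.arg t : AddCircle (2 * Real.pi)) ∧
          p.2 = (Complex.arg (1 + t) : AddCircle (2 * Real.pi))} =
      ENNReal.ofReal (Real.pi ^ 2) := by
  have himage : {p : AddCircle (2 * π) × AddCircle (2 * π) |
        ∃ t : ℂ, t ≠ 0 ∧ t ≠ -1 ∧ p.1 = (arg t : AddCircle (2 * π)) ∧
          p.2 = (arg (1 + t) : AddCircle (2 * π))} = Prod.map (↑) (↑) '' coamoebaLift := by
    ext p
    constructor
    · rintro ⟨t, h₀, h₁, hp₁, hp₂⟩
      exact ⟨_, ⟨t, ⟨h₀, h₁⟩, rfl⟩, Prod.ext hp₁.symm hp₂.symm⟩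
    · rintro ⟨_, ⟨t, ⟨h₀, h₁⟩, rfl⟩, rfl⟩
      exact ⟨t, h₀, h₁, rfl, rfl⟩
  have hU := measurableSet_upperTriangle
  have hpoints : volume ({(0, 0), (π, 0), (π, π)} : Set (ℝ × ℝ)) = 0 :=
    (toFinite _).measure_zero _
  have hlift : MeasurableSet coamoebaLift :=
    coamoebaLift_eq ▸ (hU.union hU.neg).union (toFinite _).measurableSet
  rw [himage, AddCircle.volume_image_prodMap_coe (-π) (-π) hlift coamoebaLift_subset_Ioc_prod_Ioc,
    coamoebaLift_eq, measure_congr (union_ae_eq_left_of_ae_eq_empty (ae_eq_empty.2 hpoints)),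
    measure_union disjoint_upperTriangle_neg hU.neg, Measure.measure_neg, volume_upperTriangle,
    ← ENNReal.ofReal_add (by positivity) (by positivity)]
  ring_nf
end

section
/- For the real line L = {(t, 1+t) : t ∈ C \ {0,−1}} ⊂ (C*)^2, the amoeba Log(L) ⊂ R^2 has Lebesgue measure equal to π^2/2. -/
open MeasureTheory Real Set
open scoped ENNReal

/-! By the triangle inequality, `(log ‖t‖, log ‖1 + t‖)` fills exactly the region
`|eˣ - 1| ≤ eʸ ≤ 1 + eˣ`, whose vertical slice over `x ≠ 0` has length
`log ((1 + u) / (1 - u))` with `u = e^{-|x|}`. Expanding this as `2 ∑ u^(2k+1) / (2k+1)` and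
integrating termwise gives `∑ 4 / (2k+1)² = π² / 2`. -/

theorem Complex.exists_norm_eq_and_norm_one_add_eq_iff {r s : ℝ} :
    (∃ t : ℂ, ‖t‖ = r ∧ ‖1 + t‖ = s) ↔ 0 ≤ r ∧ |r - 1| ≤ s ∧ s ≤ 1 + r := by
  constructor
  · rintro ⟨t, rfl, rfl⟩
    refine ⟨norm_nonneg t, ?_, by simpa using norm_add_le 1 t⟩
    simpa [add_comm] using abs_norm_sub_norm_le t (-1)
  · rintro ⟨hr, hs₁, hs₂⟩
    -- along the upper half of the circle `‖t‖ = r`, `‖1 + t‖` runs from `1 + r` to `|1 - r|`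
    set f : ℝ → ℝ := fun θ => ‖1 + r * Complex.exp (θ * Complex.I)‖
    have hf0 : f 0 = 1 + r := by
      simp only [f, Complex.ofReal_zero, zero_mul, Complex.exp_zero, mul_one]
      exact_mod_cast norm_of_nonneg (by positivity : (0 : ℝ) ≤ 1 + r)
    have hfπ : f π = |r - 1| := by
      rw [abs_sub_comm]
      simp only [f, Complex.exp_pi_mul_I, mul_neg_one, ← sub_eq_add_neg]
      exact_mod_cast Complex.norm_real (1 - r)
    have hcont : ContinuousOn f (Icc 0 π) := by fun_prop
    obtain ⟨θ, -, hθ⟩ :=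
      intermediate_value_Icc' pi_pos.le hcont (by rw [hf0, hfπ]; exact ⟨hs₁, hs₂⟩)
    refine ⟨r * Complex.exp (θ * Complex.I), ?_, hθ⟩
    rw [norm_mul, Complex.norm_exp_ofReal_mul_I, mul_one, Complex.norm_real, norm_of_nonneg hr]

theorem Real.pos_and_eq_log_iff {a x : ℝ} : 0 < a ∧ x = log a ↔ a = exp x := by
  constructor
  · rintro ⟨ha, rfl⟩
    exact (exp_log ha).symm
  · rintro rfl
    exact ⟨exp_pos x, (log_exp x).symm⟩

theorem amoeba_line_eq_setOf_exp_snd_mem_Icc : {p : ℝ × ℝ | ∃ t : ℂ, t ≠ 0 ∧ t ≠ -1 ∧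
      p.1 = log ‖t‖ ∧ p.2 = log ‖1 + t‖} =
    {p | exp p.2 ∈ Icc |exp p.1 - 1| (1 + exp p.1)} := by
  ext ⟨x, y⟩
  have hnorm : ∀ t : ℂ, (t ≠ 0 ∧ t ≠ -1 ∧ x = log ‖t‖ ∧ y = log ‖1 + t‖) ↔
      ‖t‖ = exp x ∧ ‖1 + t‖ = exp y := fun t => by
    have h : 1 + t ≠ 0 ↔ t ≠ -1 := by rw [add_comm, ne_eq, add_eq_zero_iff_eq_neg]
    rw [← pos_and_eq_log_iff, ← pos_and_eq_log_iff, norm_pos_iff, norm_pos_iff, h]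
    tauto
  simp only [mem_ofPred_eq, mem_Icc, hnorm, Complex.exists_norm_eq_and_norm_one_add_eq_iff,
    (exp_pos x).le, true_and]

theorem Real.volume_exp_preimage_Icc {a b : ℝ} (ha : 0 < a) (hb : 0 < b) :
    volume (exp ⁻¹' Icc a b) = ENNReal.ofReal (log b - log a) := by
  have : exp ⁻¹' Icc a b = Icc (log a) (log b) := by
    ext y
    simp only [mem_preimage, mem_Icc, log_le_iff_le_exp ha, le_log_iff_exp_le hb]
  rw [this, volume_Icc]

theorem volume_setOf_exp_snd_mem_Icc {f g : ℝ → ℝ} (hf : Measurable f) (hg : Measurable g)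
    (hf₀ : ∀ᵐ x, 0 < f x) (hg₀ : ∀ᵐ x, 0 < g x) :
    volume {p : ℝ × ℝ | exp p.2 ∈ Icc (f p.1) (g p.1)} =
      ∫⁻ x, ENNReal.ofReal (log (g x) - log (f x)) := by
  have hmeas : MeasurableSet {p : ℝ × ℝ | exp p.2 ∈ Icc (f p.1) (g p.1)} :=
    (measurableSet_le (hf.comp measurable_fst) (measurable_exp.comp measurable_snd)).inter
      (measurableSet_le (measurable_exp.comp measurable_snd) (hg.comp measurable_fst))
  rw [Measure.volume_eq_prod, Measure.prod_apply hmeas]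
  refine lintegral_congr_ae ?_
  filter_upwards [hf₀, hg₀] with x hfx hgx
  exact volume_exp_preimage_Icc hfx hgx

theorem lintegral_comp_abs (f : ℝ → ℝ≥0∞) : ∫⁻ x, f |x| = 2 * ∫⁻ x in Ioi 0, f x := by
  have hpos : ∫⁻ x in Ioi 0, f |x| = ∫⁻ x in Ioi 0, f x :=
    setLIntegral_congr_fun measurableSet_Ioi fun x hx => by rw [abs_of_pos hx]
  have hneg : ∫⁻ x in Iic 0, f |x| = ∫⁻ x in Ioi 0, f |x| := by
    have := (Measure.measurePreserving_neg (volume : Measure ℝ)).setLIntegral_comp_preimage_emb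
      (Homeomorph.neg ℝ).measurableEmbedding (fun x => f |x|) (Ioi 0)
    simpa [abs_neg, restrict_Iio_eq_restrict_Iic] using this
  rw [← lintegral_add_compl _ measurableSet_Ioi, compl_Ioi, hneg, hpos, two_mul]

theorem log_one_add_exp_sub_log_abs_exp_sub_one (x : ℝ) :
    log (1 + exp x) - log |exp x - 1| = log (1 + exp (-|x|)) - log (1 - exp (-|x|)) := by
  rcases le_or_gt x 0 with hx | hx
  · rw [abs_of_nonpos hx, neg_neg, abs_of_nonpos (sub_nonpos.2 (exp_le_one_iff.2 hx)), neg_sub]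
  · have hlt : exp (-x) < 1 := exp_lt_one_iff.2 (neg_lt_zero.2 hx)
    have hmul : exp x * exp (-x) = 1 := by rw [← exp_add, add_neg_cancel, exp_zero]
    have h₁ : 1 + exp x = exp x * (1 + exp (-x)) := by linear_combination -hmul
    have h₂ : exp x - 1 = exp x * (1 - exp (-x)) := by linear_combination hmul
    rw [abs_of_pos hx, abs_of_pos (sub_pos.2 (one_lt_exp_iff.2 hx)), h₁, h₂,
      log_mul (exp_ne_zero x) (by positivity), log_mul (exp_ne_zero x) (sub_ne_zero.2 hlt.ne')]
    ring

theorem hasSum_log_one_add_exp_neg_sub_log_one_sub_exp_neg {x : ℝ} (hx : 0 < x) :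
    HasSum (fun k : ℕ => 2 / (2 * k + 1) * exp (-(2 * k + 1) * x))
      (log (1 + exp (-x)) - log (1 - exp (-x))) := by
  have habs : |exp (-x)| < 1 := by
    rw [abs_of_pos (exp_pos _)]
    exact exp_lt_one_iff.2 (neg_lt_zero.2 hx)
  convert hasSum_log_sub_log_of_abs_lt_one habs using 2 with k
  rw [← exp_nat_mul]
  push_cast
  ring_nf

theorem lintegral_Ioi_ofReal_exp_neg_mul {a : ℝ} (ha : 0 < a) :
    ∫⁻ x in Ioi 0, ENNReal.ofReal (exp (-a * x)) = ENNReal.ofReal a⁻¹ := by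
  rw [← ofReal_integral_eq_lintegral_ofReal (exp_neg_integrableOn_Ioi 0 ha)
    (ae_of_all _ fun _ => (exp_pos _).le), integral_exp_mul_Ioi (neg_lt_zero.2 ha)]
  simp

theorem hasSum_one_div_two_mul_add_one_sq :
    HasSum (fun k : ℕ => 1 / (2 * k + 1 : ℝ) ^ 2) (π ^ 2 / 8) := by
  have heven : HasSum (fun k : ℕ => 1 / ((2 * k : ℕ) : ℝ) ^ 2) (π ^ 2 / 6 / 4) := by
    have h : (fun k : ℕ => 1 / ((2 * k : ℕ) : ℝ) ^ 2) = fun k : ℕ => 1 / (k : ℝ) ^ 2 / 4 := by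
      funext k
      push_cast
      ring
    rw [h]
    exact hasSum_zeta_two.div_const 4
  have hodd : Summable fun k : ℕ => 1 / ((2 * k + 1 : ℕ) : ℝ) ^ 2 :=
    hasSum_zeta_two.summable.comp_injective (i := fun k : ℕ => 2 * k + 1)
      fun a b h => by simpa using h
  have hsplit := (HasSum.even_add_odd (f := fun n : ℕ => 1 / (n : ℝ) ^ 2) heven
    hodd.hasSum).unique hasSum_zeta_two
  convert hodd.hasSum using 1
  · push_cast
    rfl
  · linarith

theorem lintegral_log_one_add_exp_sub_log_abs_exp_sub_one :
    ∫⁻ x, ENNReal.ofReal (log (1 + exp x) - log |exp x - 1|) = ENNReal.ofReal (π ^ 2 / 2) := by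
  simp_rw [log_one_add_exp_sub_log_abs_exp_sub_one]
  rw [lintegral_comp_abs fun x => ENNReal.ofReal (log (1 + exp (-x)) - log (1 - exp (-x)))]
  have hseries : ∀ x ∈ Ioi (0 : ℝ), ENNReal.ofReal (log (1 + exp (-x)) - log (1 - exp (-x))) =
      ∑' k : ℕ, ENNReal.ofReal (2 / (2 * k + 1)) * ENNReal.ofReal (exp (-(2 * k + 1) * x)) := by
    intro x hx
    have h := hasSum_log_one_add_exp_neg_sub_log_one_sub_exp_neg hx
    rw [← h.tsum_eq, ENNReal.ofReal_tsum_of_nonneg (fun k => by positivity) h.summable]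
    exact tsum_congr fun k => ENNReal.ofReal_mul (by positivity)
  have hterm : ∀ k : ℕ, ∫⁻ x in Ioi 0,
      ENNReal.ofReal (2 / (2 * k + 1)) * ENNReal.ofReal (exp (-(2 * k + 1) * x)) =
        ENNReal.ofReal (2 * (1 / (2 * k + 1) ^ 2)) := fun k => by
    rw [lintegral_const_mul _ (by fun_prop), lintegral_Ioi_ofReal_exp_neg_mul (by positivity),
      ← ENNReal.ofReal_mul (by positivity)]
    congr 1
    field_simp
  rw [setLIntegral_congr_fun measurableSet_Ioi hseries, lintegral_tsum fun k => by fun_prop]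
  simp_rw [hterm]
  have hsum := hasSum_one_div_two_mul_add_one_sq.mul_left 2
  rw [← ENNReal.ofReal_tsum_of_nonneg (fun k => by positivity) hsum.summable, hsum.tsum_eq,
    ← ENNReal.ofReal_ofNat 2, ← ENNReal.ofReal_mul zero_le_two]
  ring_nf

/-- The amoeba of the real line {(t, 1+t)} ⊂ (ℂ*)² has Lebesgue measure π²/2. -/
theorem amoeba_of_line_volume :
    volume {p : ℝ × ℝ | ∃ t : ℂ, t ≠ 0 ∧ t ≠ -1 ∧
        p.1 = Real.log ‖t‖ ∧ p.2 = Real.log ‖1 + t‖} =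
      ENNReal.ofReal (Real.pi ^ 2 / 2) := by
  have hlow : ∀ᵐ x : ℝ, 0 < |exp x - 1| := (Measure.ae_ne volume 0).mono fun x hx =>
    abs_pos.2 (sub_ne_zero.2 (mt (exp_eq_one_iff x).1 hx))
  have hup : ∀ᵐ x : ℝ, 0 < 1 + exp x := ae_of_all _ fun x => by positivity
  rw [amoeba_line_eq_setOf_exp_snd_mem_Icc,
    volume_setOf_exp_snd_mem_Icc (by fun_prop) (by fun_prop) hlow hup,
    lintegral_log_one_add_exp_sub_log_abs_exp_sub_one]
end

section
/- Let θ, ψ ∈ (0, π) ∪ (π, 2π) be angles with e^{iθ} ≠ ±1 and e^{iψ} ≠ ±1. Then there exists t ∈ C* with arg(t) ≡ θ and arg(1+t) ≡ ψ (mod 2π) if and only if (θ, ψ) lies in one of the two open triangles {0 < ψ < θ < π} ∪ {π < θ < ψ < 2π} (taking representatives in (0, 2π)); moreover, when it exists, such t is unique with r = |t| determined by r = sin(ψ)/sin(θ − ψ). -/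
/-!
Write `t = r e^{iθ}` and `1 + t = s e^{iψ}` with `r, s ≥ 0`. Rotating `1 + r e^{iθ} = s e^{iψ}` by
`e^{-iψ}` and by `e^{-iθ}` and taking imaginary parts gives the sine rule in the triangle
`0, -1, t`: `r sin (θ - ψ) = sin ψ` and `s sin (θ - ψ) = sin θ`. When `sin θ ≠ 0` this forces
`sin (θ - ψ) ≠ 0`, so `r` and hence `t` are determined by `(θ, ψ)`; conversely the identity
`sin (θ - ψ) + sin ψ e^{iθ} = sin θ e^{iψ}` produces `t` as soon as both quotients are positive.
For `θ, ψ ∈ (0, π) ∪ (π, 2π)` that sign condition says exactly that `sin θ`, `sin ψ` and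
`sin (θ - ψ)` have a common sign, i.e. that `(θ, ψ)` lies in one of the two triangles.
-/

open Complex

namespace Real

theorem sin_pos_iff_of_neg_pi_lt_of_lt_pi {x : ℝ} (h₁ : -π < x) (h₂ : x < π) :
    0 < sin x ↔ 0 < x := by
  refine ⟨fun h => ?_, fun h => sin_pos_of_pos_of_lt_pi h h₂⟩
  by_contra! hx
  exact (sin_nonpos_of_nonpos_of_neg_pi_le hx h₁.le).not_gt h

theorem sin_neg_iff_of_neg_pi_lt_of_lt_pi {x : ℝ} (h₁ : -π < x) (h₂ : x < π) :
    sin x < 0 ↔ x < 0 := by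
  simpa using sin_pos_iff_of_neg_pi_lt_of_lt_pi (x := -x) (by linarith) (by linarith)

theorem sin_neg_of_pi_lt_of_lt_two_pi {x : ℝ} (h₁ : π < x) (h₂ : x < 2 * π) : sin x < 0 := by
  rw [← sin_sub_two_pi]
  exact sin_neg_of_neg_of_neg_pi_lt (by linarith) (by linarith)

theorem sin_div_sin_sub_pos_iff {θ ψ : ℝ}
    (hθ : (0 < θ ∧ θ < π) ∨ (π < θ ∧ θ < 2 * π))
    (hψ : (0 < ψ ∧ ψ < π) ∨ (π < ψ ∧ ψ < 2 * π)) :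
    (0 < sin ψ / sin (θ - ψ) ∧ 0 < sin θ / sin (θ - ψ)) ↔
      (0 < ψ ∧ ψ < θ ∧ θ < π) ∨ (π < θ ∧ θ < ψ ∧ ψ < 2 * π) := by
  rw [div_pos_iff, div_pos_iff]
  rcases hθ with ⟨hθ₀, hθπ⟩ | ⟨hθπ, hθ₂⟩ <;> rcases hψ with ⟨hψ₀, hψπ⟩ | ⟨hψπ, hψ₂⟩
  · have := sin_pos_of_pos_of_lt_pi hθ₀ hθπ
    have := sin_pos_of_pos_of_lt_pi hψ₀ hψπ
    have := sin_pos_iff_of_neg_pi_lt_of_lt_pi (x := θ - ψ) (by linarith) (by linarith)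
    grind
  · have := sin_pos_of_pos_of_lt_pi hθ₀ hθπ
    have := sin_neg_of_pi_lt_of_lt_two_pi hψπ hψ₂
    grind
  · have := sin_neg_of_pi_lt_of_lt_two_pi hθπ hθ₂
    have := sin_pos_of_pos_of_lt_pi hψ₀ hψπ
    grind
  · have := sin_neg_of_pi_lt_of_lt_two_pi hθπ hθ₂
    have := sin_neg_of_pi_lt_of_lt_two_pi hψπ hψ₂
    have := sin_neg_iff_of_neg_pi_lt_of_lt_pi (x := θ - ψ) (by linarith) (by linarith)
    grind

end Real

namespace Complex

theorem eq_norm_mul_exp_of_arg_coe_eq {z : ℂ} {θ : ℝ} (h : (arg z : Real.Angle) = θ) :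
    z = ‖z‖ * exp (θ * I) := by
  have hexp : exp (arg z * I) = exp (θ * I) := by
    simpa [Circle.coe_exp] using congrArg (fun a => (Real.Angle.toCircle a : ℂ)) h
  rw [← hexp, norm_mul_exp_arg_mul_I]

theorem arg_ofReal_mul_exp_mul_I_coe_angle {r : ℝ} (hr : 0 < r) (θ : ℝ) :
    (arg (r * exp (θ * I)) : Real.Angle) = θ := by
  rw [arg_real_mul _ hr, arg_exp_mul_I, Real.Angle.coe_toIocMod]

theorem sin_sub_add_sin_mul_exp_mul_I (θ ψ : ℝ) :
    (Real.sin (θ - ψ) : ℂ) + Real.sin ψ * exp (θ * I) = Real.sin θ * exp (ψ * I) := by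
  apply Complex.ext <;>
    simp only [add_re, add_im, ofReal_re, ofReal_im, re_ofReal_mul, im_ofReal_mul,
      exp_ofReal_mul_I_re, exp_ofReal_mul_I_im, Real.sin_sub] <;>
    ring

theorem mul_sin_sub_eq_of_one_add_mul_exp_eq {r s θ ψ : ℝ}
    (h : 1 + r * exp (θ * I) = s * exp (ψ * I)) :
    r * Real.sin (θ - ψ) = Real.sin ψ ∧ s * Real.sin (θ - ψ) = Real.sin θ := by
  have hre := congrArg re h
  have him := congrArg im h
  simp only [add_re, add_im, one_re, one_im, re_ofReal_mul, im_ofReal_mul, exp_ofReal_mul_I_re,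
    exp_ofReal_mul_I_im] at hre him
  rw [Real.sin_sub]
  constructor
  · linear_combination Real.cos ψ * him - Real.sin ψ * hre
  · linear_combination Real.cos θ * him - Real.sin θ * hre

section

variable {t : ℂ} {θ ψ : ℝ}

theorem norm_mul_sin_sub_eq_of_arg_coe_eq (hθ : (arg t : Real.Angle) = θ)
    (hψ : (arg (1 + t) : Real.Angle) = ψ) :
    ‖t‖ * Real.sin (θ - ψ) = Real.sin ψ ∧ ‖1 + t‖ * Real.sin (θ - ψ) = Real.sin θ :=
  mul_sin_sub_eq_of_one_add_mul_exp_eq <| by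
    rw [← eq_norm_mul_exp_of_arg_coe_eq hθ, ← eq_norm_mul_exp_of_arg_coe_eq hψ]

theorem norm_eq_sin_div_sin_sub_of_arg_coe_eq (hsin : Real.sin θ ≠ 0)
    (hθ : (arg t : Real.Angle) = θ) (hψ : (arg (1 + t) : Real.Angle) = ψ) :
    ‖t‖ = Real.sin ψ / Real.sin (θ - ψ) := by
  obtain ⟨ht, h1t⟩ := norm_mul_sin_sub_eq_of_arg_coe_eq hθ hψ
  refine eq_div_of_mul_eq (fun h => hsin ?_) ht
  rw [← h1t, h, mul_zero]

theorem eq_sin_div_sin_sub_mul_exp_of_arg_coe_eq (hsin : Real.sin θ ≠ 0)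
    (hθ : (arg t : Real.Angle) = θ) (hψ : (arg (1 + t) : Real.Angle) = ψ) :
    t = ↑(Real.sin ψ / Real.sin (θ - ψ)) * exp (θ * I) := by
  rw [← norm_eq_sin_div_sin_sub_of_arg_coe_eq hsin hθ hψ]
  exact eq_norm_mul_exp_of_arg_coe_eq hθ

theorem exists_arg_coe_eq_and_arg_one_add_coe_eq_iff (hsin : Real.sin θ ≠ 0) :
    (∃ t : ℂ, t ≠ 0 ∧ (arg t : Real.Angle) = θ ∧ (arg (1 + t) : Real.Angle) = ψ) ↔
      0 < Real.sin ψ / Real.sin (θ - ψ) ∧ 0 < Real.sin θ / Real.sin (θ - ψ) := by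
  constructor
  · rintro ⟨t, ht, hθ, hψ⟩
    obtain ⟨-, h1t⟩ := norm_mul_sin_sub_eq_of_arg_coe_eq hθ hψ
    have hsub : Real.sin (θ - ψ) ≠ 0 := fun h => hsin (by rw [← h1t, h, mul_zero])
    rw [← norm_eq_sin_div_sin_sub_of_arg_coe_eq hsin hθ hψ, ← eq_div_of_mul_eq hsub h1t]
    refine ⟨norm_pos_iff.2 ht, norm_pos_iff.2 fun h => hsin ?_⟩
    rw [← h1t, h, norm_zero, zero_mul]
  · rintro ⟨hr, hs⟩
    have hsub : (Real.sin (θ - ψ) : ℂ) ≠ 0 := ofReal_ne_zero.2 fun h => by simp [h] at hr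
    have h1t : 1 + ↑(Real.sin ψ / Real.sin (θ - ψ)) * exp (θ * I) =
        ↑(Real.sin θ / Real.sin (θ - ψ)) * exp (ψ * I) := by
      rw [ofReal_div, ofReal_div, div_mul_eq_mul_div, div_mul_eq_mul_div,
        ← sin_sub_add_sin_mul_exp_mul_I θ ψ, add_div, div_self hsub]
    refine ⟨_, mul_ne_zero (ofReal_ne_zero.2 hr.ne') (exp_ne_zero _),
      arg_ofReal_mul_exp_mul_I_coe_angle hr θ, ?_⟩
    rw [h1t]
    exact arg_ofReal_mul_exp_mul_I_coe_angle hs ψ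

end

end Complex

/-- Description of the coamoeba of the line {(t, 1+t)} ⊂ (ℂ*)²: for angles
θ, ψ ∈ (0,π) ∪ (π,2π), there is t ∈ ℂ* with arg t ≡ θ and arg(1+t) ≡ ψ
(mod 2π) iff (θ,ψ) lies in one of two open triangles; such a t is unique,
with |t| = sin ψ / sin(θ − ψ). -/
theorem coamoeba_of_line_triangles (θ ψ : ℝ)
    (hθ : (0 < θ ∧ θ < Real.pi) ∨ (Real.pi < θ ∧ θ < 2 * Real.pi))
    (hψ : (0 < ψ ∧ ψ < Real.pi) ∨ (Real.pi < ψ ∧ ψ < 2 * Real.pi)) :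
    ((∃ t : ℂ, t ≠ 0 ∧ (Complex.arg t : Real.Angle) = (θ : Real.Angle) ∧
        (Complex.arg (1 + t) : Real.Angle) = (ψ : Real.Angle)) ↔
      ((0 < ψ ∧ ψ < θ ∧ θ < Real.pi) ∨
       (Real.pi < θ ∧ θ < ψ ∧ ψ < 2 * Real.pi))) ∧
    (∀ t₁ t₂ : ℂ,
      (t₁ ≠ 0 ∧ (Complex.arg t₁ : Real.Angle) = (θ : Real.Angle) ∧
        (Complex.arg (1 + t₁) : Real.Angle) = (ψ : Real.Angle)) →
      (t₂ ≠ 0 ∧ (Complex.arg t₂ : Real.Angle) = (θ : Real.Angle) ∧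
        (Complex.arg (1 + t₂) : Real.Angle) = (ψ : Real.Angle)) →
      t₁ = t₂) ∧
    (∀ t : ℂ,
      (t ≠ 0 ∧ (Complex.arg t : Real.Angle) = (θ : Real.Angle) ∧
        (Complex.arg (1 + t) : Real.Angle) = (ψ : Real.Angle)) →
      ‖t‖ = Real.sin ψ / Real.sin (θ - ψ)) := by
  have hsin : Real.sin θ ≠ 0 := by
    rcases hθ with ⟨hθ₀, hθπ⟩ | ⟨hθπ, hθ₂⟩
    exacts [(Real.sin_pos_of_pos_of_lt_pi hθ₀ hθπ).ne',
      (Real.sin_neg_of_pi_lt_of_lt_two_pi hθπ hθ₂).ne]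
  refine ⟨(exists_arg_coe_eq_and_arg_one_add_coe_eq_iff hsin).trans
    (Real.sin_div_sin_sub_pos_iff hθ hψ), ?_, ?_⟩
  · rintro t₁ t₂ ⟨-, hθ₁, hψ₁⟩ ⟨-, hθ₂, hψ₂⟩
    exact (eq_sin_div_sin_sub_mul_exp_of_arg_coe_eq hsin hθ₁ hψ₁).trans
      (eq_sin_div_sin_sub_mul_exp_of_arg_coe_eq hsin hθ₂ hψ₂).symm
  · rintro t ⟨-, hθt, hψt⟩
    exact norm_eq_sin_div_sin_sub_of_arg_coe_eq hsin hθt hψt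
end
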